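/- arXiv:1401.1545 — 4 statements merged into one kernel-verified Lean document; each statement's English description precedes it below -/
import Mathlib

section
/- (Reciprocally convex combination lemma, two-block case) Let R = R' ≥ 0 and G be n×n real matrices such that the block matrix [[R, G],[G', R]] is positive semidefinite. Then for any δ_0, δ_1 ∈ R^n and any α, β > 0 with α + β = 1, (1/α) δ_0' R δ_0 + (1/β) δ_1' R δ_1 ≥ δ_0' R δ_0 + δ_1' R δ_1 + δ_0'(G + G') δ_1. -/
open Matrix

/-! Evaluating the block form at `(x, y)` and at `(y, x)` and averaging gives
`0 ≤ x'Rx + y'Ry + x'(G + G')y`. At `x = β δ₀`, `y = -α δ₁` this is exactly `α β` times the gap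
`δ₀'Rδ₀ / α + δ₁'Rδ₁ / β - (δ₀'Rδ₀ + δ₁'Rδ₁ + δ₀'(G + G')δ₁)`, because `1 - α = β`. -/

namespace Matrix

variable {m n 𝕜 : Type*} [Fintype m] [Fintype n] [Field 𝕜] [LinearOrder 𝕜] [IsStrictOrderedRing 𝕜]
  [StarRing 𝕜] [TrivialStar 𝕜]

theorem PosSemidef.fromBlocks_dotProduct_mulVec_nonneg {A : Matrix m m 𝕜} {B : Matrix m n 𝕜}
    {D : Matrix n n 𝕜} (h : (fromBlocks A B Bᵀ D).PosSemidef) (x : m → 𝕜) (y : n → 𝕜) :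
    0 ≤ x ⬝ᵥ A *ᵥ x + 2 * (x ⬝ᵥ B *ᵥ y) + y ⬝ᵥ D *ᵥ y := by
  have := h.dotProduct_mulVec_nonneg (Sum.elim x y)
  simp only [fromBlocks_mulVec, star_trivial, sumElim_dotProduct_sumElim, Sum.elim_comp_inl,
    Sum.elim_comp_inr, dotProduct_add, dotProduct_transpose_mulVec] at this
  linarith

theorem PosSemidef.fromBlocks_equal_diag_dotProduct_mulVec_nonneg {R G : Matrix n n 𝕜}
    (h : (fromBlocks R G Gᵀ R).PosSemidef) (x y : n → 𝕜) :
    0 ≤ x ⬝ᵥ R *ᵥ x + y ⬝ᵥ R *ᵥ y + x ⬝ᵥ (G + Gᵀ) *ᵥ y := by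
  have hxy := h.fromBlocks_dotProduct_mulVec_nonneg x y
  have hyx := h.fromBlocks_dotProduct_mulVec_nonneg y x
  rw [add_mulVec, dotProduct_add, dotProduct_transpose_mulVec]
  linarith

end Matrix

theorem reciprocally_convex_two_block_general {n : ℕ}
    (R G : Matrix (Fin n) (Fin n) ℝ)
    (hblock : (Matrix.fromBlocks R G Gᵀ R).PosSemidef)
    (δ₀ δ₁ : Fin n → ℝ) (α β : ℝ) (hα : 0 < α) (hβ : 0 < β) (hαβ : α + β = 1) :
    δ₀ ⬝ᵥ R *ᵥ δ₀ + δ₁ ⬝ᵥ R *ᵥ δ₁ + δ₀ ⬝ᵥ (G + Gᵀ) *ᵥ δ₁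
      ≤ (1 / α) * (δ₀ ⬝ᵥ R *ᵥ δ₀) + (1 / β) * (δ₁ ⬝ᵥ R *ᵥ δ₁) := by
  have h := hblock.fromBlocks_equal_diag_dotProduct_mulVec_nonneg (β • δ₀) (-(α • δ₁))
  simp only [mulVec_neg, mulVec_smul, dotProduct_neg, neg_dotProduct, dotProduct_smul,
    smul_dotProduct, smul_eq_mul] at h
  set a := δ₀ ⬝ᵥ R *ᵥ δ₀
  set b := δ₁ ⬝ᵥ R *ᵥ δ₁
  set c := δ₀ ⬝ᵥ (G + Gᵀ) *ᵥ δ₁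
  have hgap : 1 / α * a + 1 / β * b - (a + b + c)
      = (β ^ 2 * a + α ^ 2 * b - α * β * c) / (α * β) := by
    obtain rfl : β = 1 - α := by linarith
    field_simp
    ring
  have hgap_nonneg : 0 ≤ (β ^ 2 * a + α ^ 2 * b - α * β * c) / (α * β) := by
    apply div_nonneg _ (by positivity)
    linarith
  linarith

/-- Reciprocally convex combination lemma (two-block case):
if `[[R, G],[Gᵀ, R]] ⪰ 0` with `R = Rᵀ ⪰ 0`, then for `α, β > 0`, `α + β = 1`,
`(1/α) δ₀'Rδ₀ + (1/β) δ₁'Rδ₁ ≥ δ₀'Rδ₀ + δ₁'Rδ₁ + δ₀'(G + Gᵀ)δ₁`. -/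
theorem reciprocally_convex_two_block {n : ℕ}
    (R G : Matrix (Fin n) (Fin n) ℝ) (hRsymm : R.IsSymm) (hRpsd : R.PosSemidef)
    (hblock : (Matrix.fromBlocks R G Gᵀ R).PosSemidef)
    (δ₀ δ₁ : Fin n → ℝ) (α β : ℝ) (hα : 0 < α) (hβ : 0 < β) (hαβ : α + β = 1) :
    δ₀ ⬝ᵥ R *ᵥ δ₀ + δ₁ ⬝ᵥ R *ᵥ δ₁ + δ₀ ⬝ᵥ (G + Gᵀ) *ᵥ δ₁
      ≤ (1 / α) * (δ₀ ⬝ᵥ R *ᵥ δ₀) + (1 / β) * (δ₁ ⬝ᵥ R *ᵥ δ₁) :=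
  reciprocally_convex_two_block_general R G hblock δ₀ δ₁ α β hα hβ hαβ
end

section
/- (Generalized reciprocal convexity) Let R = R' ≥ 0 and G be n×n matrices with [[R, G],[G', R]] ⪰ 0, and define the symmetric matrix M = (G + G')/2. Let δ_0, …, δ_p ∈ R^n and let α_0, …, α_p > 0 satisfy ∑_ν α_ν = 1. Then ∑_{ν=0}^p (1/α_ν) δ_ν' R δ_ν ≥ δ' Ψ δ, where δ = (δ_0', …, δ_p')' and Ψ is the (p+1)×(p+1)-block matrix with diagonal blocks R and all off-diagonal blocks M. -/
/-!
Testing the positive semidefinite block matrix `[[R, G], [Gᵀ, R]]` against `(b • x, -(a • y))`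
gives `2 xᵀ G y ≤ (b / a) xᵀ R x + (a / b) yᵀ R y`. With `a = α_μ`, `b = α_ν` this bounds every
block `δ_μᵀ Ψ_μν δ_ν` of the quadratic form by `½ ((α_ν / α_μ) q_μ + (α_μ / α_ν) q_ν)`, where
`q_μ = δ_μᵀ R δ_μ`; summing over all pairs gives `(∑ α) ∑ q_μ / α_μ = ∑ q_μ / α_μ`.
-/

open Matrix

theorem dotProduct_mulVec_uncurry_blocks {ι κ S : Type*} [Fintype ι] [Fintype κ]
    [CommSemiring S] (B : ι → ι → Matrix κ κ S) (x : ι → κ → S) :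
    (fun q : ι × κ => x q.1 q.2) ⬝ᵥ
        (fun q r : ι × κ => B q.1 r.1 q.2 r.2 : Matrix (ι × κ) (ι × κ) S) *ᵥ
        (fun q : ι × κ => x q.1 q.2)
      = ∑ i, ∑ j, x i ⬝ᵥ B i j *ᵥ x j := by
  simp only [dotProduct, mulVec, Fintype.sum_prod_type, Finset.mul_sum]
  exact Finset.sum_congr rfl fun i _ => Finset.sum_comm

namespace Matrix.PosSemidef

variable {n : Type*} [Fintype n] {A D G : Matrix n n ℝ}

theorem two_mul_mul_dotProduct_mulVec_le (h : (fromBlocks A G Gᵀ D).PosSemidef)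
    (x y : n → ℝ) (a b : ℝ) :
    2 * (a * b) * (x ⬝ᵥ G *ᵥ y) ≤ a ^ 2 * (x ⬝ᵥ A *ᵥ x) + b ^ 2 * (y ⬝ᵥ D *ᵥ y) := by
  have h₀ := h.dotProduct_mulVec_nonneg (Sum.elim (a • x) (-(b • y)))
  have hGt : y ⬝ᵥ Gᵀ *ᵥ x = x ⬝ᵥ G *ᵥ y := by
    rw [mulVec_transpose, dotProduct_comm, ← dotProduct_mulVec]
  simp only [fromBlocks_mulVec, Sum.elim_comp_inl, Sum.elim_comp_inr, star_trivial,
    sumElim_dotProduct_sumElim, mulVec_smul, mulVec_neg, dotProduct_add, dotProduct_neg,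
    neg_dotProduct, dotProduct_smul, smul_dotProduct, smul_eq_mul, hGt] at h₀
  linear_combination h₀

theorem two_mul_dotProduct_mulVec_le_div (h : (fromBlocks A G Gᵀ D).PosSemidef)
    (x y : n → ℝ) {a b : ℝ} (ha : 0 < a) (hb : 0 < b) :
    2 * (x ⬝ᵥ G *ᵥ y) ≤ b / a * (x ⬝ᵥ A *ᵥ x) + a / b * (y ⬝ᵥ D *ᵥ y) := by
  have key := h.two_mul_mul_dotProduct_mulVec_le x y b a
  rw [← mul_le_mul_iff_of_pos_left (mul_pos ha hb)]
  calc a * b * (2 * (x ⬝ᵥ G *ᵥ y)) = 2 * (b * a) * (x ⬝ᵥ G *ᵥ y) := by ring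
    _ ≤ b ^ 2 * (x ⬝ᵥ A *ᵥ x) + a ^ 2 * (y ⬝ᵥ D *ᵥ y) := key
    _ = a * b * (b / a * (x ⬝ᵥ A *ᵥ x) + a / b * (y ⬝ᵥ D *ᵥ y)) := by
      field_simp

/-- Both cross terms `xᵀ G y` and `yᵀ G x` obey the same weighted bound, so their mean does. -/
theorem dotProduct_symmPart_mulVec_le (h : (fromBlocks A G Gᵀ A).PosSemidef)
    (x y : n → ℝ) {a b : ℝ} (ha : 0 < a) (hb : 0 < b) :
    x ⬝ᵥ ((1 / 2 : ℝ) • (G + Gᵀ)) *ᵥ y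
      ≤ 1 / 2 * (b / a * (x ⬝ᵥ A *ᵥ x) + a / b * (y ⬝ᵥ A *ᵥ y)) := by
  have hxy := h.two_mul_dotProduct_mulVec_le_div x y ha hb
  have hyx := h.two_mul_dotProduct_mulVec_le_div y x hb ha
  have hGt : x ⬝ᵥ Gᵀ *ᵥ y = y ⬝ᵥ G *ᵥ x := by
    rw [mulVec_transpose, dotProduct_comm, ← dotProduct_mulVec]
  rw [smul_mulVec, add_mulVec, dotProduct_smul, dotProduct_add, hGt, smul_eq_mul]
  linarith

end Matrix.PosSemidef

theorem Finset.sum_sum_half_div_mul_add_div_mul {ι : Type*} [Fintype ι] (α q : ι → ℝ)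
    (hsum : ∑ i, α i = 1) :
    ∑ i, ∑ j, 1 / 2 * (α j / α i * q i + α i / α j * q j) = ∑ i, 1 / α i * q i := by
  have hsymm : ∑ i, ∑ j, α i / α j * q j = ∑ i, ∑ j, α j / α i * q i := Finset.sum_comm
  have hsingle : ∑ i, ∑ j, α j / α i * q i = ∑ i, 1 / α i * q i := by
    refine Finset.sum_congr rfl fun i _ => ?_
    rw [← Finset.sum_mul, ← Finset.sum_div, hsum]
  simp only [← Finset.mul_sum, Finset.sum_add_distrib, hsymm, hsingle]
  ring

theorem generalized_reciprocal_convexity_general {n p : ℕ}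
    (R G : Matrix (Fin n) (Fin n) ℝ)
    (hblock : (Matrix.fromBlocks R G Gᵀ R).PosSemidef)
    (δ : Fin (p + 1) → (Fin n → ℝ)) (α : Fin (p + 1) → ℝ)
    (hα : ∀ ν, 0 < α ν) (hsum : ∑ ν, α ν = 1) :
    (fun q : Fin (p + 1) × Fin n => δ q.1 q.2) ⬝ᵥ
        (fun (q r : Fin (p + 1) × Fin n) =>
          if q.1 = r.1 then R q.2 r.2
          else ((1 / 2 : ℝ) • (G + Gᵀ)) q.2 r.2 :
          Matrix (Fin (p + 1) × Fin n) (Fin (p + 1) × Fin n) ℝ) *ᵥ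
        (fun q : Fin (p + 1) × Fin n => δ q.1 q.2)
      ≤ ∑ ν, (1 / α ν) * (δ ν ⬝ᵥ R *ᵥ δ ν) := by
  let Ψ : Fin (p + 1) → Fin (p + 1) → Matrix (Fin n) (Fin n) ℝ :=
    fun μ ν => if μ = ν then R else (1 / 2 : ℝ) • (G + Gᵀ)
  have hΨ : (fun (q r : Fin (p + 1) × Fin n) =>
        if q.1 = r.1 then R q.2 r.2 else ((1 / 2 : ℝ) • (G + Gᵀ)) q.2 r.2 :
        Matrix (Fin (p + 1) × Fin n) (Fin (p + 1) × Fin n) ℝ)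
      = fun q r => Ψ q.1 r.1 q.2 r.2 := by
    ext q r
    simp only [Ψ, apply_ite (fun M : Matrix (Fin n) (Fin n) ℝ => M q.2 r.2)]
  rw [hΨ, dotProduct_mulVec_uncurry_blocks,
    ← Finset.sum_sum_half_div_mul_add_div_mul α (fun ν => δ ν ⬝ᵥ R *ᵥ δ ν) hsum]
  gcongr with μ _ ν _
  by_cases hμν : μ = ν
  · subst hμν
    simp only [Ψ, if_pos, div_self (hα μ).ne', one_mul]
    linarith
  · simpa only [Ψ, if_neg hμν] using hblock.dotProduct_symmPart_mulVec_le _ _ (hα μ) (hα ν)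

/-- Generalized reciprocal convexity (Lemma 2 of the paper):
with `[[R,G],[Gᵀ,R]] ⪰ 0`, `M = (G+Gᵀ)/2`, weights `α_ν > 0` summing to 1,
`∑_ν (1/α_ν) δ_ν' R δ_ν ≥ δ' Ψ δ` where `Ψ` has diagonal blocks `R` and
off-diagonal blocks `M`. -/
theorem generalized_reciprocal_convexity {n p : ℕ}
    (R G : Matrix (Fin n) (Fin n) ℝ) (hRsymm : R.IsSymm) (hRpsd : R.PosSemidef)
    (hblock : (Matrix.fromBlocks R G Gᵀ R).PosSemidef)
    (δ : Fin (p + 1) → (Fin n → ℝ)) (α : Fin (p + 1) → ℝ)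
    (hα : ∀ ν, 0 < α ν) (hsum : ∑ ν, α ν = 1) :
    (fun q : Fin (p + 1) × Fin n => δ q.1 q.2) ⬝ᵥ
        (fun (q r : Fin (p + 1) × Fin n) =>
          if q.1 = r.1 then R q.2 r.2
          else ((1 / 2 : ℝ) • (G + Gᵀ)) q.2 r.2 :
          Matrix (Fin (p + 1) × Fin n) (Fin (p + 1) × Fin n) ℝ) *ᵥ
        (fun q : Fin (p + 1) × Fin n => δ q.1 q.2)
      ≤ ∑ ν, (1 / α ν) * (δ ν ⬝ᵥ R *ᵥ δ ν) :=
  generalized_reciprocal_convexity_general R G hblock δ α hα hsum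
end

section
/- In the setting of the generalized reciprocal convexity lemma: let t_k < t and let τ ≥ (t - t_{k-p+1}) where t_{k-p+1} < t_{k-p+2} < … < t_k < t. Then τ [ (1/(t - t_k)) δ_0' R δ_0 + ∑_{ν=1}^{p-1} (1/(t_{k-ν+1} - t_{k-ν})) δ_ν' R δ_ν + (1/(t_{k-p+1} - t + τ)) δ_p' R δ_p ] ≥ δ' Ψ δ, provided all denominators are positive. -/
/-!
Write `w₀, …, w_p` for the lengths of the `p + 1` subintervals into which `t_k, …, t_{k-p+1}`
cut `[t - τ, t]`, so that `∑ w_ν = τ`. The block condition on `R, G` gives, for every `s > 0`,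
`2 δ_i' Ĝ δ_j ≤ s δ_i' R δ_i + s⁻¹ δ_j' R δ_j` with `Ĝ = (G + G')/2`. Choosing `s = w_j / w_i`
for each off-diagonal block of `δ' Ψ δ` and summing, the coefficient of `δ_i' R δ_i` becomes
`∑_j w_j / w_i = τ / w_i`.
-/

open Matrix Finset

lemma dotProduct_mulVec_fromBlocks_nonneg {m : Type*} [Fintype m] {R G : Matrix m m ℝ}
    (hblock : (fromBlocks R G Gᵀ R).PosSemidef) (x y : m → ℝ) :
    0 ≤ x ⬝ᵥ R *ᵥ x + y ⬝ᵥ R *ᵥ y + 2 * (x ⬝ᵥ G *ᵥ y) := by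
  have h := hblock.dotProduct_mulVec_nonneg (Sum.elim x y)
  simp only [star_trivial, fromBlocks_mulVec, sumElim_dotProduct_sumElim,
    dotProduct_add, Sum.elim_comp_inl, Sum.elim_comp_inr, dotProduct_transpose_mulVec] at h
  linarith

lemma two_mul_dotProduct_symmPart_mulVec_le {m : Type*} [Fintype m] {R G : Matrix m m ℝ}
    (hblock : (fromBlocks R G Gᵀ R).PosSemidef) (x y : m → ℝ) {s : ℝ} (hs : 0 < s) :
    2 * (x ⬝ᵥ ((1 / 2 : ℝ) • (G + Gᵀ)) *ᵥ y) ≤ s * (x ⬝ᵥ R *ᵥ x) + s⁻¹ * (y ⬝ᵥ R *ᵥ y) := by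
  have hxy := dotProduct_mulVec_fromBlocks_nonneg hblock (s • x) (-y)
  have hyx := dotProduct_mulVec_fromBlocks_nonneg hblock (-y) (s • x)
  simp only [mulVec_smul, mulVec_neg, dotProduct_neg, dotProduct_smul, smul_dotProduct,
    neg_dotProduct, smul_eq_mul, neg_neg] at hxy hyx
  have hsym : x ⬝ᵥ ((1 / 2 : ℝ) • (G + Gᵀ)) *ᵥ y = (x ⬝ᵥ G *ᵥ y + y ⬝ᵥ G *ᵥ x) / 2 := by
    simp only [smul_mulVec, add_mulVec, dotProduct_smul, dotProduct_add,
      dotProduct_transpose_mulVec, smul_eq_mul]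
    ring
  have key : s * (x ⬝ᵥ G *ᵥ y + y ⬝ᵥ G *ᵥ x) ≤ s ^ 2 * (x ⬝ᵥ R *ᵥ x) + y ⬝ᵥ R *ᵥ y := by
    linarith
  calc 2 * (x ⬝ᵥ ((1 / 2 : ℝ) • (G + Gᵀ)) *ᵥ y)
      = s⁻¹ * (s * (x ⬝ᵥ G *ᵥ y + y ⬝ᵥ G *ᵥ x)) := by
        rw [hsym, inv_mul_cancel_left₀ hs.ne']; ring
    _ ≤ s⁻¹ * (s ^ 2 * (x ⬝ᵥ R *ᵥ x) + y ⬝ᵥ R *ᵥ y) := by gcongr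
    _ = s * (x ⬝ᵥ R *ᵥ x) + s⁻¹ * (y ⬝ᵥ R *ᵥ y) := by field_simp

lemma dotProduct_mulVec_ite_blocks {ι m α : Type*} [Fintype ι] [DecidableEq ι] [Fintype m]
    [CommSemiring α] (A B : Matrix m m α) (x : ι → m → α) :
    (fun q : ι × m => x q.1 q.2) ⬝ᵥ
        (fun (q r : ι × m) => if q.1 = r.1 then A q.2 r.2 else B q.2 r.2 :
          Matrix (ι × m) (ι × m) α) *ᵥ (fun q : ι × m => x q.1 q.2)
      = ∑ i, ∑ j, if i = j then x i ⬝ᵥ A *ᵥ x i else x i ⬝ᵥ B *ᵥ x j := by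
  simp only [dotProduct, mulVec, Fintype.sum_prod_type, Finset.mul_sum]
  rw [Finset.sum_congr rfl fun i _ => Finset.sum_comm]
  refine Finset.sum_congr rfl fun i _ => Finset.sum_congr rfl fun j _ => ?_
  split_ifs with h
  · subst h; rfl
  · rfl

lemma reciprocally_convex_bound {ι : Type*} [Fintype ι] [DecidableEq ι] (w Q : ι → ℝ)
    (C : ι → ι → ℝ) (hw : ∀ i, 0 < w i)
    (hC : ∀ i j, i ≠ j → ∀ s : ℝ, 0 < s → 2 * C i j ≤ s * Q i + s⁻¹ * Q j) :
    ∑ i, ∑ j, (if i = j then Q i else C i j) ≤ ∑ i, (∑ j, w j) / w i * Q i := by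
  calc ∑ i, ∑ j, (if i = j then Q i else C i j)
      ≤ ∑ i, ∑ j, (w j / w i * Q i + w i / w j * Q j) / 2 := by
        gcongr with i _ j _
        split_ifs with h
        · subst h
          rw [div_self (hw i).ne']
          linarith
        · have := hC i j h (w j / w i) (div_pos (hw j) (hw i))
          rw [inv_div] at this
          linarith
    _ = ∑ i, ∑ j, w j / w i * Q i := by
        simp only [add_div, Finset.sum_add_distrib]
        rw [Finset.sum_comm (f := fun i j => w i / w j * Q j / 2)]
        simp only [← Finset.sum_add_distrib, add_halves]
    _ = ∑ i, (∑ j, w j) / w i * Q i := by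
        simp only [← Finset.sum_mul, ← Finset.sum_div]

lemma sum_range_succ_eq_add_sum_Ico_add {M : Type*} [AddCommMonoid M] {p : ℕ} (hp : 0 < p)
    (f : ℕ → M) : ∑ ν ∈ range (p + 1), f ν = f 0 + ∑ ν ∈ Ico 1 p, f ν + f p := by
  rw [sum_range_succ, range_eq_Ico, sum_eq_sum_Ico_succ_bot hp]

/-- Lengths of the subintervals `[t_k, t]`, `[t_{k-ν}, t_{k-ν+1}]` and `[t - τ, t_{k-p+1}]`
into which the points `g m = t_{k-m}` cut the delay interval `[t - τ, t]`. -/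
def delayWeight (p : ℕ) (t τ : ℝ) (g : ℕ → ℝ) (ν : ℕ) : ℝ :=
  if ν = 0 then t - g 0 else if ν = p then g (p - 1) - t + τ else g (ν - 1) - g ν

section delayWeight

variable {p : ℕ} {t τ : ℝ} {g : ℕ → ℝ}

lemma delayWeight_zero : delayWeight p t τ g 0 = t - g 0 := by
  simp [delayWeight]

lemma delayWeight_self (hp : 0 < p) : delayWeight p t τ g p = g (p - 1) - t + τ := by
  simp [delayWeight, hp.ne']

lemma delayWeight_of_mem_Ico {ν : ℕ} (hν : ν ∈ Ico 1 p) :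
    delayWeight p t τ g ν = g (ν - 1) - g ν := by
  rw [mem_Ico] at hν
  simp [delayWeight, show ν ≠ 0 by omega, hν.2.ne]

lemma sum_delayWeight (hp : 0 < p) : ∑ ν ∈ range (p + 1), delayWeight p t τ g ν = τ := by
  have htelescope : ∑ ν ∈ Ico 1 p, (g (ν - 1) - g ν) = g 0 - g (p - 1) := by
    rw [sum_Ico_eq_sum_range]
    simp only [add_comm 1]
    exact sum_range_sub' g (p - 1)
  rw [sum_range_succ_eq_add_sum_Ico_add hp, sum_congr rfl fun ν => delayWeight_of_mem_Ico,
    htelescope, delayWeight_zero, delayWeight_self hp]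
  ring

lemma delayWeight_pos (hp : 0 < p) (hdec : ∀ m, m + 1 < p → g (m + 1) < g m) (ht : g 0 < t)
    (hlast : 0 < g (p - 1) - t + τ) {ν : ℕ} (hν : ν ≤ p) : 0 < delayWeight p t τ g ν := by
  rcases Nat.eq_zero_or_pos ν with rfl | hν0
  · rw [delayWeight_zero]; linarith
  rcases hν.eq_or_lt with rfl | hνp
  · rwa [delayWeight_self hp]
  rw [delayWeight_of_mem_Ico (mem_Ico.2 ⟨hν0, hνp⟩)]
  have := hdec (ν - 1) (by omega)
  rw [Nat.sub_add_cancel hν0] at this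
  linarith

lemma sum_range_div_delayWeight_mul (hp : 0 < p) (Q : ℕ → ℝ) :
    ∑ ν ∈ range (p + 1), τ / delayWeight p t τ g ν * Q ν
      = τ * ((1 / (t - g 0)) * Q 0 + ∑ ν ∈ Ico 1 p, (1 / (g (ν - 1) - g ν)) * Q ν
          + (1 / (g (p - 1) - t + τ)) * Q p) := by
  rw [sum_range_succ_eq_add_sum_Ico_add hp,
    sum_congr rfl fun ν hν => by rw [delayWeight_of_mem_Ico hν], delayWeight_zero,
    delayWeight_self hp, mul_add, mul_add, mul_sum]
  simp only [div_eq_mul_one_div τ, mul_assoc]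

end delayWeight

theorem delay_partition_reciprocal_bound_general {n p : ℕ} (hp : 0 < p)
    (R G : Matrix (Fin n) (Fin n) ℝ)
    (hblock : (Matrix.fromBlocks R G Gᵀ R).PosSemidef)
    (t τ : ℝ) (g : ℕ → ℝ)
    (hdec : ∀ m, m + 1 < p → g (m + 1) < g m)
    (ht : g 0 < t)
    (hlast : 0 < g (p - 1) - t + τ)
    (δ : ℕ → (Fin n → ℝ)) :
    (fun q : Fin (p + 1) × Fin n => δ q.1.val q.2) ⬝ᵥ
        (fun (q r : Fin (p + 1) × Fin n) =>
          if q.1 = r.1 then R q.2 r.2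
          else ((1 / 2 : ℝ) • (G + Gᵀ)) q.2 r.2 :
          Matrix (Fin (p + 1) × Fin n) (Fin (p + 1) × Fin n) ℝ) *ᵥ
        (fun q : Fin (p + 1) × Fin n => δ q.1.val q.2)
      ≤ τ * ((1 / (t - g 0)) * (δ 0 ⬝ᵥ R *ᵥ δ 0)
          + ∑ ν ∈ Finset.Ico 1 p,
              (1 / (g (ν - 1) - g ν)) * (δ ν ⬝ᵥ R *ᵥ δ ν)
          + (1 / (g (p - 1) - t + τ)) * (δ p ⬝ᵥ R *ᵥ δ p)) := by
  have hbound := reciprocally_convex_bound (fun i : Fin (p + 1) => delayWeight p t τ g i)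
    (fun i => δ i ⬝ᵥ R *ᵥ δ i) (fun i j => δ i ⬝ᵥ ((1 / 2 : ℝ) • (G + Gᵀ)) *ᵥ δ j)
    (fun i => delayWeight_pos hp hdec ht hlast (Nat.lt_succ_iff.1 i.2))
    (fun _ _ _ _ hs => two_mul_dotProduct_symmPart_mulVec_le hblock _ _ hs)
  rw [Fin.sum_univ_eq_sum_range (delayWeight p t τ g), sum_delayWeight hp,
    Fin.sum_univ_eq_sum_range (fun ν => τ / delayWeight p t τ g ν * (δ ν ⬝ᵥ R *ᵥ δ ν)),
    sum_range_div_delayWeight_mul hp] at hbound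
  rwa [dotProduct_mulVec_ite_blocks R _ (fun i : Fin (p + 1) => δ i)]

/-- Lemma 2 of the paper: bound on the reciprocally weighted quadratic forms
arising from partitioning the delay interval. Here `g m` denotes `t_{k-m}`
for `m = 0, …, p-1`, so `g 0 = t_k` and `g (p-1) = t_{k-p+1}`. -/
theorem delay_partition_reciprocal_bound {n p : ℕ} (hp : 0 < p)
    (R G : Matrix (Fin n) (Fin n) ℝ) (hRsymm : R.IsSymm) (hRpsd : R.PosSemidef)
    (hblock : (Matrix.fromBlocks R G Gᵀ R).PosSemidef)
    (t τ : ℝ) (g : ℕ → ℝ)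
    (hdec : ∀ m, m + 1 < p → g (m + 1) < g m)
    (ht : g 0 < t) (hτ : t - g (p - 1) ≤ τ)
    (hlast : 0 < g (p - 1) - t + τ)
    (δ : ℕ → (Fin n → ℝ)) :
    (fun q : Fin (p + 1) × Fin n => δ q.1.val q.2) ⬝ᵥ
        (fun (q r : Fin (p + 1) × Fin n) =>
          if q.1 = r.1 then R q.2 r.2
          else ((1 / 2 : ℝ) • (G + Gᵀ)) q.2 r.2 :
          Matrix (Fin (p + 1) × Fin n) (Fin (p + 1) × Fin n) ℝ) *ᵥ
        (fun q : Fin (p + 1) × Fin n => δ q.1.val q.2)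
      ≤ τ * ((1 / (t - g 0)) * (δ 0 ⬝ᵥ R *ᵥ δ 0)
          + ∑ ν ∈ Finset.Ico 1 p,
              (1 / (g (ν - 1) - g ν)) * (δ ν ⬝ᵥ R *ᵥ δ ν)
          + (1 / (g (p - 1) - t + τ)) * (δ p ⬝ᵥ R *ᵥ δ p)) :=
  delay_partition_reciprocal_bound_general hp R G hblock t τ g hdec ht hlast δ
end

section
/- (Matrix Wirtinger inequality) Let W be a symmetric positive semidefinite n×n matrix and f : [a,b] → R^n continuously differentiable with f(a) = 0. Then ∫_a^b f(t)' W f(t) dt ≤ (4(b−a)²/π²) ∫_a^b f'(t)' W f'(t) dt. -/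
/-! Picone's identity: if `ψ' = -(k² + ψ²)` on `[a, b]`, then
`g'² - k² g² = (g' - ψ g)² + (ψ g²)'`. With `ψ t = k tan (k (b - t))` and `k (b - a) < π / 2`
the boundary terms vanish when `g a = 0`, giving `k² ∫ g² ≤ ∫ g'²`; letting `k` increase to
`π / (2 (b - a))` gives the sharp constant (at the critical `k` itself `ψ` blows up at `a`).
A positive semidefinite `W` is a sum of rank-one matrices `v vᵀ`, so the matrix inequality is
the sum of the scalar ones for the functions `v ⬝ f`. -/

open Matrix intervalIntegral Real Set
open MeasureTheory (volume)

theorem Real.hasDerivAt_mul_tan_mul_sub {k c t : ℝ} (h : cos (k * (c - t)) ≠ 0) :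
    HasDerivAt (fun t => k * tan (k * (c - t)))
      (-(k ^ 2 + (k * tan (k * (c - t))) ^ 2)) t := by
  have hlin : HasDerivAt (fun t => k * (c - t)) (-k) t := by
    simpa using ((hasDerivAt_id t).const_sub c).const_mul k
  refine (((hasDerivAt_tan h).comp t hlin).const_mul k).congr_deriv ?_
  rw [← inv_one_add_tan_sq h]
  field_simp

theorem mul_integral_sq_add_le_integral_deriv_sq_of_riccati {a b q : ℝ} (hab : a ≤ b)
    {g g' ψ : ℝ → ℝ} (hg : ∀ t ∈ Icc a b, HasDerivWithinAt g (g' t) (Icc a b) t)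
    (hg' : ContinuousOn g' (Icc a b))
    (hψ : ∀ t ∈ Icc a b, HasDerivWithinAt ψ (-(q + ψ t ^ 2)) (Icc a b) t) :
    q * (∫ t in a..b, g t ^ 2) + (ψ b * g b ^ 2 - ψ a * g a ^ 2) ≤ ∫ t in a..b, g' t ^ 2 := by
  have hgc : ContinuousOn g (Icc a b) := fun t ht => (hg t ht).continuousWithinAt
  have hψc : ContinuousOn ψ (Icc a b) := fun t ht => (hψ t ht).continuousWithinAt
  set F' : ℝ → ℝ := fun t => -(q + ψ t ^ 2) * g t ^ 2 + ψ t * (2 * g t * g' t)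
  have hF' : IntervalIntegrable F' volume a b := by
    apply ContinuousOn.intervalIntegrable_of_Icc hab
    fun_prop
  have hFTC : ∫ t in a..b, F' t = ψ b * g b ^ 2 - ψ a * g a ^ 2 := by
    refine integral_eq_sub_of_hasDeriv_right_of_le hab (hψc.mul (hgc.pow 2))
      (fun t ht => ?_) hF'
    have ht' := Ioo_subset_Icc_self ht
    have hprod := ((hψ t ht').mul ((hg t ht').pow 2)).hasDerivAt (Icc_mem_nhds ht.1 ht.2)
    refine (hprod.congr_deriv ?_).hasDerivWithinAt
    simp only [F', Pi.pow_apply]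
    ring
  have hpicone : 0 ≤ ∫ t in a..b, (g' t ^ 2 - q * g t ^ 2 - F' t) :=
    integral_nonneg hab fun t _ => by
      rw [show g' t ^ 2 - q * g t ^ 2 - F' t = (g' t - ψ t * g t) ^ 2 by simp only [F']; ring]
      positivity
  have hg2 : IntervalIntegrable (fun t => g t ^ 2) volume a b :=
    (hgc.pow 2).intervalIntegrable_of_Icc hab
  have hg'2 : IntervalIntegrable (fun t => g' t ^ 2) volume a b :=
    (hg'.pow 2).intervalIntegrable_of_Icc hab
  rw [integral_sub (hg'2.sub (hg2.const_mul q)) hF', integral_sub hg'2 (hg2.const_mul q),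
    integral_const_mul, hFTC] at hpicone
  linarith

theorem sq_mul_integral_sq_le_of_lt_pi_div_two {a b s : ℝ} (hab : a ≤ b) (hs : 0 ≤ s)
    (hsπ : s < π / 2) {g g' : ℝ → ℝ}
    (hg : ∀ t ∈ Icc a b, HasDerivWithinAt g (g' t) (Icc a b) t)
    (hg' : ContinuousOn g' (Icc a b)) (hga : g a = 0) :
    s ^ 2 * ∫ t in a..b, g t ^ 2 ≤ (b - a) ^ 2 * ∫ t in a..b, g' t ^ 2 := by
  rcases hab.eq_or_lt with rfl | hab
  · simp
  have hba : 0 < b - a := sub_pos.2 hab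
  set k := s / (b - a)
  -- `ψ t = k tan (k (b - t))` is the log-derivative of `cos (k (b - t))`, positive on `[a, b]`.
  have hcos : ∀ t ∈ Icc a b, cos (k * (b - t)) ≠ 0 := by
    intro t ht
    refine (cos_pos_of_mem_Ioo ⟨?_, ?_⟩).ne'
    · have : 0 ≤ k * (b - t) := mul_nonneg (div_nonneg hs hba.le) (sub_nonneg.2 ht.2)
      linarith [pi_pos]
    · calc k * (b - t) ≤ k * (b - a) := by gcongr; exact ht.1
        _ = s := div_mul_cancel₀ s hba.ne'
        _ < π / 2 := hsπ
  have hpicone := mul_integral_sq_add_le_integral_deriv_sq_of_riccati hab.le hg hg'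
    (ψ := fun t => k * tan (k * (b - t))) (q := k ^ 2)
    fun t ht => (hasDerivAt_mul_tan_mul_sub (hcos t ht)).hasDerivWithinAt
  have hks : s ^ 2 = (b - a) ^ 2 * k ^ 2 := by
    simp only [k]
    field_simp
  rw [hks, mul_assoc]
  gcongr
  simpa [hga] using hpicone

open Filter Topology in
theorem wirtinger_inequality {a b : ℝ} (hab : a ≤ b) {g g' : ℝ → ℝ}
    (hg : ∀ t ∈ Icc a b, HasDerivWithinAt g (g' t) (Icc a b) t)
    (hg' : ContinuousOn g' (Icc a b)) (hga : g a = 0) :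
    ∫ t in a..b, g t ^ 2 ≤ 4 * (b - a) ^ 2 / π ^ 2 * ∫ t in a..b, g' t ^ 2 := by
  have hlim : (π / 2) ^ 2 * ∫ t in a..b, g t ^ 2 ≤ (b - a) ^ 2 * ∫ t in a..b, g' t ^ 2 := by
    refine le_of_tendsto (x := 𝓝[<] (π / 2))
      (f := fun s => s ^ 2 * ∫ t in a..b, g t ^ 2) ?_ ?_
    · exact ((continuous_id.pow 2).mul continuous_const).continuousWithinAt.tendsto
    · filter_upwards [Ioo_mem_nhdsLT (half_pos pi_pos)] with s hs
      exact sq_mul_integral_sq_le_of_lt_pi_div_two hab hs.1.le hs.2 hg hg' hga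
  rw [div_mul_eq_mul_div, le_div_iff₀ (by positivity)]
  linarith

theorem Matrix.dotProduct_sum_vecMulVec_mulVec {ι m R : Type*} [Fintype ι] [Fintype m]
    [CommSemiring R] (v : ι → m → R) (x : m → R) :
    x ⬝ᵥ (∑ i, vecMulVec (v i) (v i)) *ᵥ x = ∑ i, (v i ⬝ᵥ x) ^ 2 := by
  simp [sum_mulVec, vecMulVec_mulVec, dotProduct_sum, dotProduct_comm x (v _), sq]

theorem HasDerivWithinAt.const_dotProduct {m : Type*} [Fintype m] {f : ℝ → m → ℝ}
    {f' : m → ℝ} {s : Set ℝ} {x : ℝ} (v : m → ℝ) (hf : HasDerivWithinAt f f' s x) :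
    HasDerivWithinAt (fun t => v ⬝ᵥ f t) (v ⬝ᵥ f') s x :=
  HasDerivWithinAt.fun_sum fun j _ => (hasDerivWithinAt_pi.1 hf j).const_mul (v j)

theorem matrix_wirtinger_inequality_general {n : ℕ} (a b : ℝ) (hab : a ≤ b)
    (W : Matrix (Fin n) (Fin n) ℝ) (hWpsd : W.PosSemidef)
    (f : ℝ → (Fin n → ℝ))
    (hf : ContDiffOn ℝ 1 f (Set.Icc a b)) (hfa : f a = 0) :
    ∫ t in a..b, f t ⬝ᵥ W *ᵥ f t
      ≤ (4 * (b - a) ^ 2 / Real.pi ^ 2) *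
        ∫ t in a..b,
          derivWithin f (Set.Icc a b) t ⬝ᵥ W *ᵥ derivWithin f (Set.Icc a b) t := by
  rcases hab.eq_or_lt with rfl | hab
  · simp
  obtain ⟨m, v, rfl⟩ := posSemidef_iff_eq_sum_vecMulVec.mp hWpsd
  set f' := derivWithin f (Icc a b)
  have hderiv : ∀ t ∈ Icc a b, HasDerivWithinAt f (f' t) (Icc a b) t :=
    fun t ht => ((hf.differentiableOn one_ne_zero) t ht).hasDerivWithinAt
  have hf'c : ContinuousOn f' (Icc a b) :=
    hf.continuousOn_derivWithin (uniqueDiffOn_Icc hab) le_rfl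
  have hfc : ContinuousOn f (Icc a b) := hf.continuousOn
  simp only [star_trivial, dotProduct_sum_vecMulVec_mulVec]
  rw [integral_finsetSum fun i _ => ?_, integral_finsetSum fun i _ => ?_, Finset.mul_sum]
  · exact Finset.sum_le_sum fun i _ => wirtinger_inequality hab.le
      (fun t ht => (hderiv t ht).const_dotProduct (v i)) (by fun_prop) (by simp [hfa])
  all_goals exact ContinuousOn.intervalIntegrable_of_Icc hab.le (by fun_prop)

/-- Matrix Wirtinger inequality: for `W = Wᵀ ⪰ 0` and `f` C¹ on `[a,b]` with
`f(a) = 0`, `∫_a^b f'Wf ≤ (4(b−a)²/π²) ∫_a^b ḟ'Wḟ`. -/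
theorem matrix_wirtinger_inequality {n : ℕ} (a b : ℝ) (hab : a ≤ b)
    (W : Matrix (Fin n) (Fin n) ℝ) (hWsymm : W.IsSymm) (hWpsd : W.PosSemidef)
    (f : ℝ → (Fin n → ℝ))
    (hf : ContDiffOn ℝ 1 f (Set.Icc a b)) (hfa : f a = 0) :
    ∫ t in a..b, f t ⬝ᵥ W *ᵥ f t
      ≤ (4 * (b - a) ^ 2 / Real.pi ^ 2) *
        ∫ t in a..b,
          derivWithin f (Set.Icc a b) t ⬝ᵥ W *ᵥ derivWithin f (Set.Icc a b) t :=
  matrix_wirtinger_inequality_general a b hab W hWpsd f hf hfa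
end
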